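/- arXiv:1302.3354 — 2 statements merged into one kernel-verified Lean document; each statement's English description precedes it below -/
import Mathlib

section
/- Let e be a unit vector in ℝ^n, and let V₁,…,V_n be a basis of ℝ^n. Write M_{ij} := V_i⊙V_j − (e·V_i) e⊙V_j − (e·V_j) e⊙V_i. If P is a symmetric n×n matrix satisfying M_{ij} : P = 0 for all 1 ≤ i ≤ j ≤ n, then P = e⊙η for some vector η with η·e = 0. -/
/-!
For symmetric `P` and `a = P e`, the pairing `M_{ij} : P` equals `Vᵢ ⬝ (P − e⊗a − a⊗e) Vⱼ`.
The symmetric matrix `P − e⊗a − a⊗e` therefore has a bilinear form vanishing on all pairs of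
basis vectors, so `P = e⊗a + a⊗e`. Evaluating this at `e`, with `e ⬝ e = 1`, gives
`e ⬝ a = 2 (e ⬝ a)`, hence `a ⊥ e`, and `η = 2a` works.
-/

open Matrix BigOperators

noncomputable section

/-- Frobenius inner product `A : B = tr (A Bᵀ)`. -/
def frob {n : ℕ} (A B : Matrix (Fin n) (Fin n) ℝ) : ℝ := (A * Bᵀ).trace

/-- Symmetrized outer product `U ⊙ V = (1/2)(U⊗V + V⊗U)`. -/
def odot {n : ℕ} (U V : Fin n → ℝ) : Matrix (Fin n) (Fin n) ℝ :=
  (1 / 2 : ℝ) • (vecMulVec U V + vecMulVec V U)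

namespace Matrix

variable {ι m R : Type*} [Fintype m] [CommRing R]

theorem dotProduct_mulVec_comm_of_transpose_eq {P : Matrix m m R} (hP : Pᵀ = P) (x y : m → R) :
    x ⬝ᵥ (P *ᵥ y) = y ⬝ᵥ (P *ᵥ x) := by
  rw [dotProduct_mulVec, ← mulVec_transpose, hP, dotProduct_comm]

theorem eq_zero_of_dotProduct_mulVec_basis [DecidableEq m] (b : Module.Basis ι R (m → R))
    {Q : Matrix m m R} (h : ∀ i j, b i ⬝ᵥ (Q *ᵥ b j) = 0) : Q = 0 := by
  apply Matrix.toBilin'.injective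
  rw [map_zero]
  refine LinearMap.BilinForm.ext_basis b fun i j => ?_
  rw [toBilin'_apply', h, LinearMap.zero_apply, LinearMap.zero_apply]

theorem eq_zero_of_transpose_eq_of_dotProduct_mulVec_basis [DecidableEq m] [LinearOrder ι]
    (b : Module.Basis ι R (m → R)) {Q : Matrix m m R} (hQ : Qᵀ = Q)
    (h : ∀ i j, i ≤ j → b i ⬝ᵥ (Q *ᵥ b j) = 0) : Q = 0 := by
  refine eq_zero_of_dotProduct_mulVec_basis b fun i j => ?_
  rcases le_total i j with hij | hji
  · exact h i j hij
  · rw [dotProduct_mulVec_comm_of_transpose_eq hQ, h j i hji]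

end Matrix

section Frobenius

variable {n : ℕ}

theorem frob_sub_left (A B P : Matrix (Fin n) (Fin n) ℝ) :
    frob (A - B) P = frob A P - frob B P := by
  simp only [frob, sub_mul, trace_sub]

theorem frob_smul_left (c : ℝ) (A P : Matrix (Fin n) (Fin n) ℝ) :
    frob (c • A) P = c * frob A P := by
  simp only [frob, smul_mul_assoc, trace_smul, smul_eq_mul]

theorem frob_vecMulVec (U W : Fin n → ℝ) (P : Matrix (Fin n) (Fin n) ℝ) :
    frob (vecMulVec U W) P = U ⬝ᵥ (P *ᵥ W) := by
  rw [frob, vecMulVec_mul, trace_vecMulVec, vecMul_transpose]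

theorem frob_odot_of_transpose_eq {P : Matrix (Fin n) (Fin n) ℝ} (hP : Pᵀ = P)
    (U W : Fin n → ℝ) : frob (odot U W) P = U ⬝ᵥ (P *ᵥ W) := by
  rw [odot, frob_smul_left]
  simp only [frob, add_mul, trace_add]
  rw [← frob, ← frob, frob_vecMulVec, frob_vecMulVec,
    dotProduct_mulVec_comm_of_transpose_eq hP W U]
  ring

theorem frob_odot_sub_odot_sub_odot {P : Matrix (Fin n) (Fin n) ℝ} (hP : Pᵀ = P)
    (e U W : Fin n → ℝ) :
    frob (odot U W - (e ⬝ᵥ U) • odot e W - (e ⬝ᵥ W) • odot e U) P =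
      U ⬝ᵥ ((P - vecMulVec e (P *ᵥ e) - vecMulVec (P *ᵥ e) e) *ᵥ W) := by
  simp only [frob_sub_left, frob_smul_left, frob_odot_of_transpose_eq hP, sub_mulVec,
    dotProduct_sub, vecMulVec_mulVec, dotProduct_smul, op_smul_eq_smul, smul_eq_mul]
  rw [dotProduct_mulVec_comm_of_transpose_eq hP e W,
    dotProduct_mulVec_comm_of_transpose_eq hP e U, dotProduct_comm (P *ᵥ e), dotProduct_comm U e]
  ring

theorem odot_two_smul_right (e a : Fin n → ℝ) :
    odot e ((2 : ℝ) • a) = vecMulVec e a + vecMulVec a e := by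
  rw [odot, vecMulVec_smul, smul_vecMulVec, ← smul_add, smul_smul]
  norm_num

end Frobenius

/-- Lemma 2.3 (ii) (after the change of variables `P ↦ A₀⁻¹PA₀⁻¹`, `e = ξ̂₀`): if a
symmetric matrix `P` is Frobenius-orthogonal to all
`M_{ij} = Vᵢ⊙Vⱼ − (e·Vᵢ) e⊙Vⱼ − (e·Vⱼ) e⊙Vᵢ`, `1 ≤ i ≤ j ≤ n`, for a basis
`V₁,…,V_n` and a unit vector `e`, then `P = e ⊙ η` with `η ⊥ e`. -/
theorem stmt7 {n : ℕ} (e : Fin n → ℝ) (he : e ⬝ᵥ e = 1)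
    (V : Fin n → Fin n → ℝ) (hV : LinearIndependent ℝ V)
    (P : Matrix (Fin n) (Fin n) ℝ) (hP : Pᵀ = P)
    (horth : ∀ i j : Fin n, i ≤ j →
      frob (odot (V i) (V j) - (e ⬝ᵥ V i) • odot e (V j) - (e ⬝ᵥ V j) • odot e (V i))
        P = 0) :
    ∃ η : Fin n → ℝ, η ⬝ᵥ e = 0 ∧ P = odot e η := by
  set a := P *ᵥ e with ha
  classical
  have hPa : P = vecMulVec e a + vecMulVec a e := by
    rw [← sub_eq_zero, ← sub_sub]
    refine eq_zero_of_transpose_eq_of_dotProduct_mulVec_basis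
      (basisOfPiSpaceOfLinearIndependent hV) ?_ fun i j hij => ?_
    · rw [transpose_sub, transpose_sub, transpose_vecMulVec, transpose_vecMulVec, hP,
        sub_right_comm]
    · rw [coe_basisOfPiSpaceOfLinearIndependent, ← frob_odot_sub_odot_sub_odot hP]
      exact horth i j hij
  have hae : a ⬝ᵥ e = 0 := by
    have h : e ⬝ᵥ a = 2 * (a ⬝ᵥ e) := by
      conv_lhs => rw [ha, hPa]
      simp only [add_mulVec, vecMulVec_mulVec, dotProduct_add, dotProduct_smul, op_smul_eq_smul,
        smul_eq_mul, he, dotProduct_comm e a]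
      ring
    rw [dotProduct_comm] at h
    linarith
  exact ⟨(2 : ℝ) • a, by rw [smul_dotProduct, hae, smul_zero], by rw [odot_two_smul_right, ← hPa]⟩
end
end

section
/- Let A₀ be symmetric positive definite, V := [V₁|…|V_n] invertible, Z := [Z₁|…|Z_n] invertible n×n matrices, μ a nowhere-vanishing scalar, S_i symmetric matrices (Hessians) and W_i vectors with V_i = A₀W_i, and suppose ∑_{i=1}^n Z_i ⊗ W_i + (1/μ)(∑_{i=1}^n μ_i S_i + μ S_{n+1}) = 0. Then the matrix M := ∑_i μ_i A₀S_iA₀ + μ A₀S_{n+1}A₀ satisfies M = −μ A₀ Z Vᵀ; in particular M is invertible. -/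
open Matrix BigOperators

noncomputable section

/-- Matrix with columns `v₁,…,v_n`. -/
def colMat {n : ℕ} (v : Fin n → Fin n → ℝ) : Matrix (Fin n) (Fin n) ℝ :=
  Matrix.of fun r c : Fin n => v c r

/-- Lemma 3.3 (pointwise linear algebra): if
`∑ᵢ Zᵢ⊗Wᵢ + ∑ᵢ (μᵢ/μ) Sᵢ + S' = 0` with `μ ≠ 0`, `Z = [Z₁|…|Z_n]` invertible and
`V = [A₀W₁|…|A₀W_n]` invertible, then the symmetric matrix
`M = ∑ᵢ μᵢ A₀SᵢA₀ + μ A₀S'A₀` equals `−μ A₀ Z [W]ᵀ A₀` and is invertible. -/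
theorem stmt16 {n : ℕ} (A₀ : Matrix (Fin n) (Fin n) ℝ)
    (hA₀ : A₀.PosDef) (hA₀s : A₀ᵀ = A₀)
    (Z W : Fin n → Fin n → ℝ) (S : Fin n → Matrix (Fin n) (Fin n) ℝ)
    (S' : Matrix (Fin n) (Fin n) ℝ)
    (hS : ∀ i, (S i)ᵀ = S i) (hS' : S'ᵀ = S')
    (μ : Fin n → ℝ) (μ₀ : ℝ) (hμ₀ : μ₀ ≠ 0)
    (hZ : IsUnit (colMat Z).det)
    (hV : IsUnit (colMat fun i => A₀.mulVec (W i)).det)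
    (hrel : (∑ i : Fin n, vecMulVec (Z i) (W i)) +
      (∑ i : Fin n, (μ i / μ₀) • S i) + S' = 0) :
    (∑ i : Fin n, μ i • (A₀ * S i * A₀)) + μ₀ • (A₀ * S' * A₀) =
      -μ₀ • (A₀ * colMat Z * (colMat W)ᵀ * A₀) ∧
    IsUnit ((∑ i : Fin n, μ i • (A₀ * S i * A₀)) + μ₀ • (A₀ * S' * A₀)).det := by
  -- sum of outer products equals Z Wᵀ
  have hsum : (∑ i : Fin n, vecMulVec (Z i) (W i)) = colMat Z * (colMat W)ᵀ := by
    ext r c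
    simp [Matrix.mul_apply, colMat, vecMulVec, Matrix.sum_apply, mul_comm]
  have hcol : A₀ * colMat W = colMat fun i => A₀.mulVec (W i) := by
    ext r c
    simp [Matrix.mul_apply, colMat, Matrix.mulVec, dotProduct]
  -- from hrel: ∑ μᵢ Sᵢ + μ₀ S' = -μ₀ • (Z Wᵀ)
  have h1 : (∑ i : Fin n, μ i • S i) + μ₀ • S' = -μ₀ • (colMat Z * (colMat W)ᵀ) := by
    rw [hsum, add_assoc] at hrel
    have h3 := eq_neg_of_add_eq_zero_right hrel
    have h2 : ∀ i : Fin n, μ i • S i = μ₀ • ((μ i / μ₀) • S i) := fun i => by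
      rw [smul_smul]; congr 1; field_simp
    calc (∑ i : Fin n, μ i • S i) + μ₀ • S'
        = μ₀ • ((∑ i : Fin n, (μ i / μ₀) • S i) + S') := by
          rw [smul_add, Finset.smul_sum]; simp only [← h2]
      _ = -μ₀ • (colMat Z * (colMat W)ᵀ) := by rw [h3, smul_neg, ← neg_smul]
  have hM : (∑ i : Fin n, μ i • (A₀ * S i * A₀)) + μ₀ • (A₀ * S' * A₀)
      = A₀ * ((∑ i : Fin n, μ i • S i) + μ₀ • S') * A₀ := by
    simp [Matrix.add_mul, Matrix.mul_add, Matrix.mul_sum, Matrix.sum_mul,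
      Matrix.mul_smul, Matrix.smul_mul]
  have key : (∑ i : Fin n, μ i • (A₀ * S i * A₀)) + μ₀ • (A₀ * S' * A₀)
      = -μ₀ • (A₀ * colMat Z * (colMat W)ᵀ * A₀) := by
    rw [hM, h1]
    simp [Matrix.mul_smul, Matrix.smul_mul, Matrix.mul_assoc]
  refine ⟨key, ?_⟩
  rw [key]
  have hA : IsUnit A₀.det := isUnit_iff_ne_zero.mpr (ne_of_gt hA₀.det_pos)
  have hWA : (colMat W)ᵀ * A₀ = (colMat fun i => A₀.mulVec (W i))ᵀ := by
    rw [← hcol, Matrix.transpose_mul, hA₀s]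
  have : A₀ * colMat Z * (colMat W)ᵀ * A₀
      = A₀ * colMat Z * (colMat fun i => A₀.mulVec (W i))ᵀ := by
    rw [Matrix.mul_assoc, hWA]
  rw [this]
  simp only [Matrix.smul_mul, Matrix.det_smul, Matrix.det_mul, Matrix.det_transpose, Fintype.card_fin]
  exact (((isUnit_iff_ne_zero.mpr (neg_ne_zero.mpr hμ₀)).pow n).mul
    ((hA.mul hZ).mul hV))
end
end
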